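/- arXiv:2007.13089 — 7 statements merged into one kernel-verified Lean document; each statement's English description precedes it below -/
import Mathlib

section
/- Let C be a category and let F : C ⥤ D be a functor admitting a right adjoint G : D ⥤ C. If the composite G ∘ F is an equivalence of categories (more precisely, if the monad GF is isomorphic as a functor to an equivalence, or just: GF is an equivalence), then F is fully faithful. -/
open CategoryTheory

/-!
Write `T = G ∘ F`, `η` for the unit and `μ_X = G ε_{F X} : T T X ⟶ T X`. The triangle identities
say that `μ_X` is a left inverse of both `T η_X` and `η_{T X}`. When `T` is full and faithful,
`μ_X = T ν` for a unique `ν : T X ⟶ X`; then `T (ν ∘ η_X) = μ_X ∘ T η_X = 1` gives `ν ∘ η_X = 1`,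
and naturality of `η` gives `η_X ∘ ν = T ν ∘ η_{T X} = μ_X ∘ η_{T X} = 1`. So `η` is an
isomorphism, and a left adjoint with invertible unit is fully faithful.
-/

namespace CategoryTheory.Adjunction

variable {C D : Type*} [Category C] [Category D] {F : C ⥤ D} {G : D ⥤ C}

lemma isIso_unit_app_of_full_of_faithful (adj : F ⊣ G) [(F ⋙ G).Full] [(F ⋙ G).Faithful]
    (X : C) : IsIso (adj.unit.app X) := by
  let T := F ⋙ G
  obtain ⟨ν, hν⟩ : ∃ ν : T.obj X ⟶ X, T.map ν = G.map (adj.counit.app (F.obj X)) :=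
    T.map_surjective _
  refine ⟨ν, T.map_injective ?_, ?_⟩
  · rw [T.map_comp, hν, T.map_id]
    exact (G.map_comp _ _).symm.trans ((congrArg G.map (adj.left_triangle_components X)).trans
      (G.map_id _))
  · rw [← Functor.id_map ν, adj.unit.naturality ν]
    exact (congrArg _ hν).trans (adj.right_triangle_components (F.obj X))

lemma isIso_unit_of_full_of_faithful (adj : F ⊣ G) [(F ⋙ G).Full] [(F ⋙ G).Faithful] :
    IsIso adj.unit :=
  have := adj.isIso_unit_app_of_full_of_faithful
  NatIso.isIso_of_isIso_app _

end CategoryTheory.Adjunction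

/-- If `F ⊣ G` and the composite `G ∘ F` (i.e. `F ⋙ G : C ⥤ C`) is an equivalence of
categories, then `F` is fully faithful. -/
theorem stmt0 {C D : Type*} [Category C] [Category D]
    (F : C ⥤ D) (G : D ⥤ C) (adj : F ⊣ G)
    [(F ⋙ G).IsEquivalence] : F.Full ∧ F.Faithful := by
  have := adj.isIso_unit_of_full_of_faithful
  let hF := adj.fullyFaithfulLOfIsIsoUnit
  exact ⟨hF.full, hF.faithful⟩
end

section
/- Let M be a monoid object in a monoidal category such that the underlying object of M is invertible with respect to the tensor product (i.e., there exists an object M' with M ⊗ M' ≅ 𝟙 and M' ⊗ M ≅ 𝟙, compatibly). Then the unit map η : 𝟙 → M of the monoid structure is an isomorphism. -/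
/-!
Right multiplication `μ ≫ ρ⁻¹` is a retraction of `M ◁ η`, and `e := μ ≫ ρ⁻¹ ≫ (M ◁ η)`
satisfies `e ≫ μ = μ`. If `M ⊗ (-)` is full, then `e = M ◁ g` for some
`g : M ⟶ M`, and the left unit law forces `g = 𝟙 M`. Hence `M ◁ η` is an isomorphism, and so
is `η` once `M ⊗ (-)` is also faithful.
-/

open CategoryTheory MonoidalCategory

namespace CategoryTheory.MonObj

variable {C : Type*} [Category C] [MonoidalCategory C] {M : C} [MonObj M]

theorem eq_id_of_whiskerLeft_comp_mul {g : M ⟶ M} (hg : M ◁ g ≫ μ = μ) : g = 𝟙 M := by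
  rw [← cancel_epi (λ_ M).hom, Category.comp_id]
  calc (λ_ M).hom ≫ g = η ▷ M ≫ M ◁ g ≫ μ := by
        rw [← one_mul, ← whisker_exchange_assoc, one_mul, leftUnitor_naturality]
    _ = (λ_ M).hom := by rw [hg, one_mul]

theorem isIso_whiskerLeft_one_of_full [(tensorLeft M).Full] : IsIso (M ◁ η[M]) := by
  obtain ⟨g, hg⟩ := (tensorLeft M).map_surjective (μ ≫ (ρ_ M).inv ≫ M ◁ η[M])
  have hg : M ◁ g = μ ≫ (ρ_ M).inv ≫ M ◁ η[M] := hg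
  have hg_id : g = 𝟙 M := eq_id_of_whiskerLeft_comp_mul (by simp [hg])
  refine ⟨μ ≫ (ρ_ M).inv, by simp, ?_⟩
  rw [Category.assoc, ← hg, hg_id, whiskerLeft_id]

theorem isIso_one_of_full_of_faithful [(tensorLeft M).Full] [(tensorLeft M).Faithful] :
    IsIso η[M] :=
  have : IsIso ((tensorLeft M).map η[M]) := isIso_whiskerLeft_one_of_full
  isIso_of_reflects_iso η[M] (tensorLeft M)

end CategoryTheory.MonObj

/-- If `M` is a monoid object in a monoidal category whose underlying object is invertible
with respect to the tensor product (i.e. the functor `M ⊗ (-)` is an equivalence), then the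
unit map `η : 𝟙 → M` is an isomorphism. -/
theorem stmt1 {C : Type*} [Category C] [MonoidalCategory C]
    (M : Mon C) [(tensorLeft M.X).IsEquivalence] : IsIso (MonObj.one (X := M.X)) :=
  MonObj.isIso_one_of_full_of_faithful
end

section
/- Let R be a commutative ring whose multiplication map R ⊗_ℤ R → R is bijective (R is a 'solid ring'). Then for any commutative ring S, any two ring homomorphisms R → S are equal. -/
/-!
In a solid ring `r ⊗ 1` and `1 ⊗ r` have the same image `r` under multiplication, so they are
equal. Two ring maps `f, g : R → S` induce `f ⊗ g : R ⊗ R → S`, which sends these elements to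
`f r` and `g r` respectively.
-/

open TensorProduct

section

variable {k R : Type*} [CommSemiring k] [CommSemiring R] [Algebra k R]

theorem TensorProduct.tmul_one_eq_one_tmul_of_injective_mul'
    (h : Function.Injective (LinearMap.mul' k R)) (r : R) :
    r ⊗ₜ[k] (1 : R) = (1 : R) ⊗ₜ[k] r :=
  h (by simp only [LinearMap.mul'_apply, mul_one, one_mul])

theorem AlgHom.ext_of_injective_mul' {S : Type*} [CommSemiring S] [Algebra k S]
    (h : Function.Injective (LinearMap.mul' k R)) (f g : R →ₐ[k] S) : f = g := by
  ext r
  let fg := Algebra.TensorProduct.lift f g fun _ _ => .all _ _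
  calc f r = fg (r ⊗ₜ 1) := by simp [fg]
    _ = fg (1 ⊗ₜ r) := congrArg fg (tmul_one_eq_one_tmul_of_injective_mul' h r)
    _ = g r := by simp [fg]

end

/-- If `R` is a solid commutative ring (the multiplication map `R ⊗[ℤ] R → R` is bijective),
then any two ring homomorphisms from `R` to any commutative ring `S` are equal. -/
theorem stmt2 {R : Type*} [CommRing R]
    (h : Function.Bijective (LinearMap.mul' ℤ R))
    (S : Type*) [CommRing S] (f g : R →+* S) : f = g :=
  RingHom.toIntAlgHom_injective (AlgHom.ext_of_injective_mul' h.injective _ _)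
end

section
/- Let R and S be commutative rings that are solid, i.e., their multiplication maps R ⊗_ℤ R → R and S ⊗_ℤ S → S are bijective. Then R ⊗_ℤ S is solid: its multiplication map (R ⊗_ℤ S) ⊗_ℤ (R ⊗_ℤ S) → R ⊗_ℤ S is bijective. -/
open TensorProduct

theorem LinearMap.mul'_tensor_bijective {R A B : Type*} [CommSemiring R]
    [NonUnitalNonAssocSemiring A] [NonUnitalNonAssocSemiring B] [Module R A] [Module R B]
    [SMulCommClass R A A] [SMulCommClass R B B] [IsScalarTower R A A] [IsScalarTower R B B]
    (hA : Function.Bijective (LinearMap.mul' R A))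
    (hB : Function.Bijective (LinearMap.mul' R B)) :
    Function.Bijective (LinearMap.mul' R (A ⊗[R] B)) := by
  rw [LinearMap.mul'_tensor]
  exact (map_bijective hA hB).comp (tensorTensorTensorComm R A B A B).bijective

/-- If `R` and `S` are solid commutative rings, then so is `R ⊗[ℤ] S`. -/
theorem stmt3 {R S : Type*} [CommRing R] [CommRing S]
    (hR : Function.Bijective (LinearMap.mul' ℤ R))
    (hS : Function.Bijective (LinearMap.mul' ℤ S)) :
    Function.Bijective (LinearMap.mul' ℤ (R ⊗[ℤ] S)) :=
  LinearMap.mul'_tensor_bijective hR hS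
end

section
/- Let R and S be commutative rings that are solid (their multiplication maps R ⊗_ℤ R → R and S ⊗_ℤ S → S are bijective), and suppose R ⊗_ℤ S is the zero ring. Then the product ring R × S is solid: its multiplication map (R × S) ⊗_ℤ (R × S) → R × S is bijective. -/
open TensorProduct

/-!
Tensor products distribute over finite products, so `(R × S) ⊗ (R × S)` splits as
`(R ⊗ R × R ⊗ S) × (S ⊗ R × S ⊗ S)`. Under this splitting, multiplication on `R × S` only sees
the two diagonal summands, where it is multiplication on `R` and on `S`. When the mixed
summands vanish, multiplication on `R × S` is therefore the product of the multiplication maps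
of `R` and `S`.
-/

theorem Function.bijective_fst_snd_of_subsingleton {α β γ δ : Type*}
    [Subsingleton β] [Subsingleton γ] [Nonempty β] [Nonempty γ] :
    Function.Bijective fun p : (α × β) × (γ × δ) ↦ (p.1.1, p.2.2) := by
  refine ⟨fun p q h ↦ ?_,
    fun ⟨a, d⟩ ↦ ⟨((a, Classical.arbitrary β), (Classical.arbitrary γ, d)), rfl⟩⟩
  simp only [Prod.mk.injEq] at h
  exact Prod.ext (Prod.ext h.1 (Subsingleton.elim _ _)) (Prod.ext (Subsingleton.elim _ _) h.2)

namespace TensorProduct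

variable (k R S : Type*) [CommSemiring k]
  [NonUnitalNonAssocSemiring R] [Module k R] [SMulCommClass k R R] [IsScalarTower k R R]
  [NonUnitalNonAssocSemiring S] [Module k S] [SMulCommClass k S S] [IsScalarTower k S S]

def prodProdEquiv :
    (R × S) ⊗[k] (R × S) ≃ₗ[k] (R ⊗[k] R × R ⊗[k] S) × (S ⊗[k] R × S ⊗[k] S) :=
  prodLeft k k R S (R × S) ≪≫ₗ (prodRight k k R R S).prodCongr (prodRight k k S R S)

theorem mul'_prod_eq :
    LinearMap.mul' k (R × S) =
      (LinearMap.mul' k R).prodMap (LinearMap.mul' k S) ∘ₗ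
        (LinearMap.fst k _ _).prodMap (LinearMap.snd k _ _) ∘ₗ
          (prodProdEquiv k R S).toLinearMap := by
  refine TensorProduct.ext' fun ⟨a, b⟩ y ↦ ?_
  simp [prodProdEquiv, Prod.mul_def]

theorem bijective_mul'_prod [Subsingleton (R ⊗[k] S)] [Subsingleton (S ⊗[k] R)]
    (hR : Function.Bijective (LinearMap.mul' k R)) (hS : Function.Bijective (LinearMap.mul' k S)) :
    Function.Bijective (LinearMap.mul' k (R × S)) := by
  rw [mul'_prod_eq, LinearMap.coe_comp, LinearMap.coe_comp]
  exact (hR.prodMap hS).comp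
    (Function.bijective_fst_snd_of_subsingleton.comp (prodProdEquiv k R S).bijective)

end TensorProduct

/-- If `R` and `S` are solid commutative rings and `R ⊗[ℤ] S` is the zero ring, then the
product ring `R × S` is solid. -/
theorem stmt4 {R S : Type*} [CommRing R] [CommRing S]
    (hR : Function.Bijective (LinearMap.mul' ℤ R))
    (hS : Function.Bijective (LinearMap.mul' ℤ S))
    (h0 : Subsingleton (R ⊗[ℤ] S)) :
    Function.Bijective (LinearMap.mul' ℤ (R × S)) :=
  have : Subsingleton (S ⊗[ℤ] R) := (TensorProduct.comm ℤ S R).toEquiv.subsingleton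
  bijective_mul'_prod ℤ R S hR hS
end

section
/- Let φ : ℤ_p → ℤ_p be an additive group homomorphism that vanishes on the subring ℤ_(p) ⊆ ℤ_p (the p-local integers, i.e., all elements of ℤ_p lying in the image of the localization of ℤ at p; it suffices that φ vanishes on ℤ). If φ vanishes on ℤ_(p), then φ = 0. (Key steps: the quotient ℤ_p/ℤ_(p) is p-divisible, and any additive map from a p-divisible group to ℤ_p is zero since ℤ_p is p-adically separated.) -/
/-! Every `x : ℤ_[p]` is congruent to a natural number modulo `p ^ n` for each `n`, so if `φ`
kills `ℕ` then `φ x ∈ p ^ n • ℤ_[p]` for all `n`; the target being `p`-adically separated,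
`φ x = 0`. -/

namespace PadicInt

variable {p : ℕ} [Fact p.Prime]

theorem exists_eq_natCast_add_pow_nsmul (x : ℤ_[p]) (n : ℕ) :
    ∃ (a : ℕ) (y : ℤ_[p]), x = a + p ^ n • y := by
  obtain ⟨y, hy⟩ := Ideal.mem_span_singleton'.mp (appr_spec n x)
  exact ⟨x.appr n, y, by rw [nsmul_eq_mul, ← sub_eq_iff_eq_add', ← hy]; push_cast; ring⟩

instance isHausdorff_span_natCast : IsHausdorff (Ideal.span {(p : ℤ)}) ℤ_[p] :=
  IsHausdorff.of_map (J := IsLocalRing.maximalIdeal ℤ_[p]) <| by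
    rw [Ideal.map_span, Set.image_singleton, maximalIdeal_eq_span_p]; simp

theorem addMonoidHom_eq_zero_of_map_natCast {M : Type*} [AddCommGroup M]
    [IsHausdorff (Ideal.span {(p : ℤ)}) M] (φ : ℤ_[p] →+ M) (hφ : ∀ n : ℕ, φ n = 0) :
    φ = 0 := by
  ext x
  refine IsHausdorff.haus ‹_› (φ x) fun n => ?_
  obtain ⟨a, y, rfl⟩ := exists_eq_natCast_add_pow_nsmul x n
  rw [SModEq.zero, map_add, hφ, zero_add, map_nsmul, ← Nat.cast_smul_eq_nsmul ℤ,
    Ideal.span_singleton_pow]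
  exact Submodule.smul_mem_smul (by push_cast; exact Ideal.mem_span_singleton_self _) trivial

end PadicInt

/-- If an additive group homomorphism `φ : ℤ_p → ℤ_p` vanishes on the subring `ℤ_(p)` of
`p`-local integers (all `x` with `b * x = a` for integers `a, b` with `b` prime to `p`),
then `φ = 0`. -/
theorem stmt6 (p : ℕ) [Fact p.Prime] (φ : ℤ_[p] →+ ℤ_[p])
    (h : ∀ (x : ℤ_[p]) (a b : ℤ), ¬ (p : ℤ) ∣ b → (b : ℤ_[p]) * x = (a : ℤ_[p]) → φ x = 0) :
    φ = 0 :=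
  PadicInt.addMonoidHom_eq_zero_of_map_natCast φ fun n =>
    h n n 1 (Int.natCast_dvd_ofNat.not.mpr (Fact.out : p.Prime).not_dvd_one) (by simp)
end

section
/- Let p be a prime and let δ : ℤ_p → ℤ_p be a function satisfying δ(a + b) = δ(a) + δ(b) + (a^p + b^p − (a+b)^p)/p for all a, b ∈ ℤ_p, and δ(n) = (n − n^p)/p for all n ∈ ℤ. Then δ(a) = (a − a^p)/p for all a ∈ ℤ_p. -/
/-! The defect `f a = p δ a - (a - a^p)` is additive, because the correction term in the
`p`-derivation rule is exactly the additivity defect of `a ↦ a - a^p`, and it vanishes on `ℤ`.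
Writing `a = appr a n + p^n c` shows `p^n ∣ f a` for every `n`, so `f a = 0`. -/

namespace PadicInt

variable {p : ℕ} [Fact p.Prime]

theorem eq_zero_of_forall_pow_dvd {x : ℤ_[p]} (h : ∀ n : ℕ, (p : ℤ_[p]) ^ n ∣ x) : x = 0 := by
  by_contra hx
  have := (mem_span_pow_iff_le_valuation x hx (x.valuation + 1)).1
    (Ideal.mem_span_singleton.2 (h _))
  omega

theorem addMonoidHom_eq_zero_of_map_natCast_s7 {f : ℤ_[p] →+ ℤ_[p]} (hf : ∀ n : ℕ, f n = 0) :
    f = 0 := by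
  ext a
  refine eq_zero_of_forall_pow_dvd fun n => ?_
  obtain ⟨c, hc⟩ := Ideal.mem_span_singleton'.1 (appr_spec n a)
  have ha : a = (appr a n : ℤ_[p]) + ((p ^ n : ℕ) : ℤ_[p]) • c := by
    rw [smul_eq_mul, Nat.cast_pow, mul_comm, hc]
    ring
  rw [ha, map_add, hf, zero_add, map_natCast_smul f ℤ_[p] ℤ_[p], smul_eq_mul, Nat.cast_pow]
  exact dvd_mul_right _ _

end PadicInt

/-- An additive `p`-derivation `δ` on `ℤ_p` (satisfying
`δ(a+b) = δ a + δ b + (a^p + b^p - (a+b)^p)/p` and `δ n = (n - n^p)/p` for integers `n`)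
is given by `δ a = (a - a^p)/p` for all `a ∈ ℤ_p`.  (Divisions by `p` are expressed by
multiplying both sides by `p`, which is a nonzerodivisor of `ℤ_p`.) -/
theorem stmt7 (p : ℕ) [Fact p.Prime] (δ : ℤ_[p] → ℤ_[p])
    (hadd : ∀ a b : ℤ_[p],
      (p : ℤ_[p]) * δ (a + b) = (p : ℤ_[p]) * δ a + (p : ℤ_[p]) * δ b +
        (a ^ p + b ^ p - (a + b) ^ p))
    (hint : ∀ n : ℤ, (p : ℤ_[p]) * δ (n : ℤ_[p]) = (n : ℤ_[p]) - (n : ℤ_[p]) ^ p) :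
    ∀ a : ℤ_[p], (p : ℤ_[p]) * δ a = a - a ^ p := by
  let f : ℤ_[p] →+ ℤ_[p] := AddMonoidHom.mk' (fun a => p * δ a - (a - a ^ p)) fun a b => by
    simp only [hadd a b]
    ring
  have hf : f = 0 := PadicInt.addMonoidHom_eq_zero_of_map_natCast_s7 fun n => by
    simpa [f, sub_eq_zero] using hint n
  intro a
  exact sub_eq_zero.1 (DFunLike.congr_fun hf a)
end
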